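/- arXiv:2405.04301 — 2 statements merged into one kernel-verified Lean document; each statement's English description precedes it below -/
import Mathlib

section
/- Fix p ≤ -1 and α with 0 < α < 1. Then lim_{r → 1⁺} Θ_p{α, r} = π / √((2 - 2p) + (2 + 2p) α²). -/
/-!
On `[1, r]` the function `s ↦ F_p(s, α, r)` vanishes at both ends and `-∂²F/∂s²` is
decreasing in `s`. Comparing `F` with the parabolas through its endpoints (a concavity
argument) gives `(m/2)(s-1)(r-s) ≤ F ≤ (M/2)(s-1)(r-s)` with `m = -F''(r)` and
`M = -F''(1)`. Since `∫_1^r ds/√((s-1)(r-s)) = π` (an arcsine), `Θ_p{α, r}` lies between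
`π/√(M/2)` and `π/√(m/2)`. As `r → 1⁺` the coefficient of `s^{2p}` in `F` tends to
`(1-α²)/p`, and then both `m` and `M` tend to `2((2-2p) + (2+2p)α²)`.
-/

open Real Filter

/-- `F_p(s, α, r) = ((1 - s^{2p})/(1 - r^{2p}))(r² + α²)
  + ((s^{2p} - r^{2p})/(1 - r^{2p}))(1 + α² r²) - s² - α² r² s⁻²`. -/
noncomputable def Fp (p α r s : ℝ) : ℝ :=
  (1 - s ^ (2 * p)) / (1 - r ^ (2 * p)) * (r ^ 2 + α ^ 2) +
  (s ^ (2 * p) - r ^ (2 * p)) / (1 - r ^ (2 * p)) * (1 + α ^ 2 * r ^ 2) -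
  s ^ 2 - α ^ 2 * r ^ 2 * s ^ (-2 : ℝ)

/-- The period function `Θ_p{α, r} = ∫_1^r ds / √(F_p(s, α, r))`. -/
noncomputable def Theta (p α r : ℝ) : ℝ :=
  ∫ s in (1 : ℝ)..r, (Real.sqrt (Fp p α r s))⁻¹

open Set MeasureTheory intervalIntegral Topology

section Interpolation

variable {f f' f'' : ℝ → ℝ} {a b m x : ℝ}

theorem mul_le_of_le_neg_deriv2 (hf : ContinuousOn f (Icc a b))
    (hf' : ∀ y ∈ Ioo a b, HasDerivAt f (f' y) y)
    (hf'' : ∀ y ∈ Ioo a b, HasDerivAt f' (f'' y) y)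
    (ha : f a = 0) (hb : f b = 0) (hm : ∀ y ∈ Ioo a b, m ≤ -f'' y) (hx : x ∈ Icc a b) :
    m / 2 * ((x - a) * (b - x)) ≤ f x := by
  have hab : a ≤ b := hx.1.trans hx.2
  have hconc : ConcaveOn ℝ (Icc a b) fun y => f y - m / 2 * ((y - a) * (b - y)) := by
    refine concaveOn_of_hasDerivWithinAt2_nonpos (convex_Icc a b)
      (f' := fun y => f' y - m / 2 * (a + b - 2 * y)) (f'' := fun y => f'' y + m)
      (hf.sub (by fun_prop)) (fun y hy => ?_) (fun y hy => ?_) (fun y hy => ?_)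
    all_goals rw [interior_Icc] at hy
    · have hq : HasDerivAt (fun y => m / 2 * ((y - a) * (b - y))) (m / 2 * (a + b - 2 * y)) y :=
        ((((hasDerivAt_id y).sub_const a).mul ((hasDerivAt_id y).const_sub b)).const_mul
          (m / 2)).congr_deriv (by simp only [id]; ring)
      exact ((hf' y hy).sub hq).hasDerivWithinAt
    · have hq : HasDerivAt (fun y => m / 2 * (a + b - 2 * y)) (-m) y :=
        ((((hasDerivAt_id y).const_mul 2).const_sub (a + b)).const_mul (m / 2)).congr_deriv
          (by ring)
      exact (((hf'' y hy).sub hq).congr_deriv (sub_neg_eq_add _ _)).hasDerivWithinAt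
    · linarith [hm y hy]
  have h := hconc.ge_on_segment (left_mem_Icc.2 hab) (right_mem_Icc.2 hab)
    (by rwa [segment_eq_Icc hab])
  simp only [ha, hb, sub_self, mul_zero, zero_mul, min_self] at h
  linarith

end Interpolation

section ArcsineIntegral

variable {a b : ℝ}

theorem hasDerivAt_arcsin_div_sub {x : ℝ} (hx : x ∈ Ioo a b) :
    HasDerivAt (fun y => arcsin ((2 * y - a - b) / (b - a))) (√((x - a) * (b - x)))⁻¹ x := by
  obtain ⟨hax, hxb⟩ := hx
  have hba : 0 < b - a := by linarith
  have hu : HasDerivAt (fun y => (2 * y - a - b) / (b - a)) (2 / (b - a)) x := by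
    simpa using ((((hasDerivAt_id x).const_mul 2).sub_const a).sub_const b).div_const (b - a)
  have h1 : (2 * x - a - b) / (b - a) ≠ -1 := by
    rw [ne_eq, div_eq_iff hba.ne']; linarith
  have h2 : (2 * x - a - b) / (b - a) ≠ 1 := by
    rw [ne_eq, div_eq_iff hba.ne']; linarith
  refine ((hasDerivAt_arcsin h1 h2).comp x hu).congr_deriv ?_
  have hsq : 1 - ((2 * x - a - b) / (b - a)) ^ 2 = (2 / (b - a)) ^ 2 * ((x - a) * (b - x)) := by
    field_simp; ring
  have hpos : 0 < √((x - a) * (b - x)) := sqrt_pos.2 (mul_pos (by linarith) (by linarith))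
  rw [hsq, sqrt_mul (by positivity), sqrt_sq (by positivity)]
  field_simp

theorem continuous_arcsin_div_sub :
    Continuous fun y => arcsin ((2 * y - a - b) / (b - a)) :=
  continuous_arcsin.comp (by fun_prop)

theorem intervalIntegrable_inv_sqrt_sub_mul_sub (hab : a < b) :
    IntervalIntegrable (fun x => (√((x - a) * (b - x)))⁻¹) volume a b :=
  (intervalIntegrable_iff_integrableOn_Ioc_of_le hab.le).2 <|
    integrableOn_deriv_of_nonneg continuous_arcsin_div_sub.continuousOn
      (fun _ hx => hasDerivAt_arcsin_div_sub hx) fun _ _ => by positivity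

theorem integral_inv_sqrt_sub_mul_sub (hab : a < b) :
    ∫ x in a..b, (√((x - a) * (b - x)))⁻¹ = π := by
  have hba : b - a ≠ 0 := sub_ne_zero.2 hab.ne'
  rw [integral_eq_sub_of_hasDerivAt_of_le hab.le continuous_arcsin_div_sub.continuousOn
    (fun _ hx => hasDerivAt_arcsin_div_sub hx) (intervalIntegrable_inv_sqrt_sub_mul_sub hab),
    show (2 * b - a - b) / (b - a) = 1 by field_simp; ring,
    show (2 * a - a - b) / (b - a) = -1 by field_simp; ring, arcsin_one, arcsin_neg_one]
  ring

end ArcsineIntegral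

section IntegralBounds

variable {f : ℝ → ℝ} {a b m M : ℝ}

theorem intervalIntegrable_inv_sqrt_of_mul_le (hab : a < b) (hm : 0 < m) (hf : Measurable f)
    (hlo : ∀ x ∈ Ioo a b, m * ((x - a) * (b - x)) ≤ f x) :
    IntervalIntegrable (fun x => (√(f x))⁻¹) volume a b := by
  have hdom := (intervalIntegrable_inv_sqrt_sub_mul_sub hab).const_mul (√m)⁻¹
  rw [intervalIntegrable_iff_integrableOn_Ioo_of_le hab.le] at hdom ⊢
  refine hdom.mono' hf.sqrt.inv.aestronglyMeasurable
    ((ae_restrict_iff' measurableSet_Ioo).2 (Eventually.of_forall fun x hx => ?_))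
  have hq : 0 < (x - a) * (b - x) := mul_pos (sub_pos.2 hx.1) (sub_pos.2 hx.2)
  rw [norm_of_nonneg (by positivity), ← mul_inv, ← sqrt_mul hm.le]
  exact inv_anti₀ (by positivity) (sqrt_le_sqrt (hlo x hx))

theorem integral_inv_sqrt_le_pi_div_sqrt (hab : a < b) (hm : 0 < m) (hf : Measurable f)
    (hlo : ∀ x ∈ Ioo a b, m * ((x - a) * (b - x)) ≤ f x) :
    ∫ x in a..b, (√(f x))⁻¹ ≤ π / √m := by
  calc ∫ x in a..b, (√(f x))⁻¹
      ≤ ∫ x in a..b, (√m)⁻¹ * (√((x - a) * (b - x)))⁻¹ :=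
        integral_mono_on_of_le_Ioo hab.le (intervalIntegrable_inv_sqrt_of_mul_le hab hm hf hlo)
          ((intervalIntegrable_inv_sqrt_sub_mul_sub hab).const_mul _) fun x hx => ?_
    _ = π / √m := by
        rw [intervalIntegral.integral_const_mul, integral_inv_sqrt_sub_mul_sub hab,
          inv_mul_eq_div]
  have hq : 0 < (x - a) * (b - x) := mul_pos (sub_pos.2 hx.1) (sub_pos.2 hx.2)
  rw [← mul_inv, ← sqrt_mul hm.le]
  exact inv_anti₀ (by positivity) (sqrt_le_sqrt (hlo x hx))

theorem pi_div_sqrt_le_integral_inv_sqrt (hab : a < b) (hm : 0 < m) (hf : Measurable f)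
    (hlo : ∀ x ∈ Ioo a b, m * ((x - a) * (b - x)) ≤ f x)
    (hhi : ∀ x ∈ Ioo a b, f x ≤ M * ((x - a) * (b - x))) :
    π / √M ≤ ∫ x in a..b, (√(f x))⁻¹ := by
  calc π / √M = ∫ x in a..b, (√M)⁻¹ * (√((x - a) * (b - x)))⁻¹ := by
        rw [intervalIntegral.integral_const_mul, integral_inv_sqrt_sub_mul_sub hab, inv_mul_eq_div]
    _ ≤ ∫ x in a..b, (√(f x))⁻¹ :=
        integral_mono_on_of_le_Ioo hab.le
          ((intervalIntegrable_inv_sqrt_sub_mul_sub hab).const_mul _)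
          (intervalIntegrable_inv_sqrt_of_mul_le hab hm hf hlo) fun x hx => ?_
  have hq : 0 < (x - a) * (b - x) := mul_pos (sub_pos.2 hx.1) (sub_pos.2 hx.2)
  rw [← mul_inv, ← sqrt_mul' _ hq.le]
  exact inv_anti₀ (sqrt_pos.2 ((mul_pos hm hq).trans_le (hlo x hx))) (sqrt_le_sqrt (hhi x hx))

end IntegralBounds

noncomputable def FpCoeff (p α r : ℝ) : ℝ := (1 - α ^ 2) * (1 - r ^ 2) / (1 - r ^ (2 * p))

noncomputable def Fp' (p α r s : ℝ) : ℝ :=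
  2 * p * FpCoeff p α r * s ^ (2 * p - 1) - 2 * s + 2 * α ^ 2 * r ^ 2 * s ^ (-3 : ℝ)

noncomputable def Fp'' (p α r s : ℝ) : ℝ :=
  2 * p * (2 * p - 1) * FpCoeff p α r * s ^ (2 * p - 2) - 2 - 6 * α ^ 2 * r ^ 2 * s ^ (-4 : ℝ)

section Fp

variable {p α r s : ℝ}

theorem Fp_eq_add_FpCoeff_mul (p α r s : ℝ) :
    Fp p α r s = ((r ^ 2 + α ^ 2) - r ^ (2 * p) * (1 + α ^ 2 * r ^ 2)) / (1 - r ^ (2 * p)) +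
      FpCoeff p α r * s ^ (2 * p) - s ^ 2 - α ^ 2 * r ^ 2 * s ^ (-2 : ℝ) := by
  unfold Fp FpCoeff
  ring

theorem measurable_Fp (p α r : ℝ) : Measurable (Fp p α r) := by
  unfold Fp
  fun_prop

theorem hasDerivAt_Fp (hs : s ≠ 0) : HasDerivAt (Fp p α r) (Fp' p α r s) s := by
  have h := ((((hasDerivAt_rpow_const (p := 2 * p) (Or.inl hs)).const_mul
    (FpCoeff p α r)).const_add
    (((r ^ 2 + α ^ 2) - r ^ (2 * p) * (1 + α ^ 2 * r ^ 2)) / (1 - r ^ (2 * p)))).sub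
    (hasDerivAt_pow 2 s)).sub
    ((hasDerivAt_rpow_const (p := -2) (Or.inl hs)).const_mul (α ^ 2 * r ^ 2))
  rw [show Fp p α r = _ from funext (Fp_eq_add_FpCoeff_mul p α r)]
  refine h.congr_deriv ?_
  rw [Fp']
  norm_num
  ring

theorem hasDerivAt_Fp' (hs : s ≠ 0) : HasDerivAt (Fp' p α r) (Fp'' p α r s) s := by
  have h := ((((hasDerivAt_rpow_const (p := 2 * p - 1) (Or.inl hs)).const_mul
    (2 * p * FpCoeff p α r)).sub ((hasDerivAt_id s).const_mul 2)).add
    ((hasDerivAt_rpow_const (p := -3) (Or.inl hs)).const_mul (2 * α ^ 2 * r ^ 2)))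
  refine h.congr_deriv ?_
  rw [Fp'', show 2 * p - 1 - 1 = 2 * p - 2 by ring]
  norm_num
  ring

theorem Fp_one (hr : r ^ (2 * p) ≠ 1) : Fp p α r 1 = 0 := by
  have hK : 1 - r ^ (2 * p) ≠ 0 := sub_ne_zero.2 hr.symm
  simp only [Fp, one_rpow, sub_self, zero_div, zero_mul, div_self hK, one_mul, one_pow]
  ring

theorem Fp_self (hr₀ : 0 < r) (hr : r ^ (2 * p) ≠ 1) : Fp p α r r = 0 := by
  have hK : 1 - r ^ (2 * p) ≠ 0 := sub_ne_zero.2 hr.symm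
  simp only [Fp, sub_self, zero_div, zero_mul, add_zero, div_self hK, one_mul,
    rpow_neg hr₀.le, rpow_two]
  field_simp
  ring

theorem rpow_two_mul_lt_one (hp : p < 0) (hr : 1 < r) : r ^ (2 * p) < 1 :=
  rpow_lt_one_of_one_lt_of_neg hr (by linarith)

theorem FpCoeff_nonpos (hp : p < 0) (hα : α ^ 2 ≤ 1) (hr : 1 < r) : FpCoeff p α r ≤ 0 :=
  div_nonpos_of_nonpos_of_nonneg
    (mul_nonpos_of_nonneg_of_nonpos (by linarith) (by nlinarith))
    (by linarith [rpow_two_mul_lt_one hp hr])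

theorem neg_coeff_Fp''_nonneg (hp : p < 0) (hα : α ^ 2 ≤ 1) (hr : 1 < r) :
    0 ≤ -(2 * p * (2 * p - 1) * FpCoeff p α r) := by
  have := FpCoeff_nonpos hp hα hr
  have : 0 < 2 * p * (2 * p - 1) := by nlinarith
  nlinarith

theorem antitoneOn_neg_Fp'' (hp : p < 0) (hα : α ^ 2 ≤ 1) (hr : 1 < r) :
    AntitoneOn (fun s => -Fp'' p α r s) (Ioi 0) := by
  intro s hs t _ hst
  have hκ := neg_coeff_Fp''_nonneg hp hα hr
  have h₁ := mul_le_mul_of_nonneg_left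
    (rpow_le_rpow_of_nonpos hs hst (by linarith : 2 * p - 2 ≤ 0)) hκ
  have h₂ := mul_le_mul_of_nonneg_left
    (rpow_le_rpow_of_nonpos hs hst (by norm_num : (-4 : ℝ) ≤ 0))
    (by positivity : 0 ≤ 6 * α ^ 2 * r ^ 2)
  simp only [Fp'']
  linarith

theorem two_le_neg_Fp'' (hp : p < 0) (hα : α ^ 2 ≤ 1) (hr : 1 < r) (hs : 0 < s) :
    2 ≤ -Fp'' p α r s := by
  have hκ := neg_coeff_Fp''_nonneg hp hα hr
  have : 0 ≤ -(2 * p * (2 * p - 1) * FpCoeff p α r) * s ^ (2 * p - 2) := by positivity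
  have : 0 ≤ 6 * α ^ 2 * r ^ 2 * s ^ (-4 : ℝ) := by positivity
  simp only [Fp'']
  linarith

theorem Fp_bounds (hp : p < 0) (hα : α ^ 2 ≤ 1) (hr : 1 < r) (hs : s ∈ Icc 1 r) :
    -Fp'' p α r r / 2 * ((s - 1) * (r - s)) ≤ Fp p α r s ∧
      Fp p α r s ≤ -Fp'' p α r 1 / 2 * ((s - 1) * (r - s)) := by
  have hK : r ^ (2 * p) ≠ 1 := (rpow_two_mul_lt_one hp hr).ne
  have hpos : ∀ y ∈ Icc 1 r, y ≠ 0 := fun y hy => (zero_lt_one.trans_le hy.1).ne'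
  have hcont : ContinuousOn (Fp p α r) (Icc 1 r) := fun y hy =>
    (hasDerivAt_Fp (hpos y hy)).continuousAt.continuousWithinAt
  have hf' : ∀ y ∈ Ioo 1 r, HasDerivAt (Fp p α r) (Fp' p α r y) y :=
    fun y hy => hasDerivAt_Fp (hpos y (Ioo_subset_Icc_self hy))
  have hf'' : ∀ y ∈ Ioo 1 r, HasDerivAt (Fp' p α r) (Fp'' p α r y) y :=
    fun y hy => hasDerivAt_Fp' (hpos y (Ioo_subset_Icc_self hy))
  have hneg := antitoneOn_neg_Fp'' hp hα hr
  have hlo : ∀ y ∈ Ioo 1 r, -Fp'' p α r r ≤ -Fp'' p α r y := fun y hy =>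
    hneg (zero_lt_one.trans hy.1) (zero_lt_one.trans hr) hy.2.le
  have hhi : ∀ y ∈ Ioo 1 r, -Fp'' p α r y ≤ -Fp'' p α r 1 := fun y hy =>
    hneg (zero_lt_one : (0 : ℝ) < 1) (zero_lt_one.trans hy.1) hy.1.le
  constructor
  · exact mul_le_of_le_neg_deriv2 hcont hf' hf'' (Fp_one hK) (Fp_self (by linarith) hK) hlo hs
  · have h := mul_le_of_le_neg_deriv2 (f := fun y => -Fp p α r y) (m := Fp'' p α r 1) hcont.neg
      (fun y hy => (hf' y hy).neg) (fun y hy => (hf'' y hy).neg) (by simp [Fp_one hK])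
      (by simp [Fp_self (by linarith) hK]) (fun y hy => by linarith [hhi y hy]) hs
    linarith [neg_div 2 (Fp'' p α r 1)]

theorem pi_div_sqrt_le_Theta (hp : p < 0) (hα : α ^ 2 ≤ 1) (hr : 1 < r) :
    π / √(-Fp'' p α r 1 / 2) ≤ Theta p α r :=
  pi_div_sqrt_le_integral_inv_sqrt hr
    (by linarith [two_le_neg_Fp'' hp hα hr (zero_lt_one.trans hr)]) (measurable_Fp p α r)
    (fun _ hs => (Fp_bounds hp hα hr (Ioo_subset_Icc_self hs)).1)
    (fun _ hs => (Fp_bounds hp hα hr (Ioo_subset_Icc_self hs)).2)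

theorem Theta_le_pi_div_sqrt (hp : p < 0) (hα : α ^ 2 ≤ 1) (hr : 1 < r) :
    Theta p α r ≤ π / √(-Fp'' p α r r / 2) :=
  integral_inv_sqrt_le_pi_div_sqrt hr
    (by linarith [two_le_neg_Fp'' hp hα hr (zero_lt_one.trans hr)]) (measurable_Fp p α r)
    (fun _ hs => (Fp_bounds hp hα hr (Ioo_subset_Icc_self hs)).1)

theorem tendsto_FpCoeff (hp : p ≠ 0) :
    Tendsto (FpCoeff p α) (𝓝[≠] 1) (𝓝 ((1 - α ^ 2) / p)) := by
  have hsq : HasDerivAt (fun r : ℝ => r ^ 2) 2 1 := by simpa using hasDerivAt_pow 2 (1 : ℝ)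
  have hpow : HasDerivAt (fun r : ℝ => r ^ (2 * p)) (2 * p) 1 := by
    simpa using hasDerivAt_rpow_const (x := 1) (p := 2 * p) (Or.inl one_ne_zero)
  have h := (hsq.tendsto_slope.div hpow.tendsto_slope (by simpa using hp)).const_mul (1 - α ^ 2)
  rw [show (1 - α ^ 2) * (2 / (2 * p)) = (1 - α ^ 2) / p by field_simp] at h
  refine h.congr' ?_
  filter_upwards [self_mem_nhdsWithin] with r hr
  rw [Pi.div_apply, slope_def_field, slope_def_field,
    div_div_div_cancel_right₀ (sub_ne_zero.2 hr), FpCoeff, one_pow, one_rpow, mul_div_assoc,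
    ← neg_div_neg_eq, neg_sub, neg_sub]

theorem tendsto_neg_Fp'' (hp : p ≠ 0) {g : ℝ → ℝ} (hg : Tendsto g (𝓝[≠] 1) (𝓝 1)) :
    Tendsto (fun r => -Fp'' p α r (g r)) (𝓝[≠] 1)
      (𝓝 (2 * ((2 - 2 * p) + (2 + 2 * p) * α ^ 2))) := by
  have hr : Tendsto (fun r : ℝ => r) (𝓝[≠] 1) (𝓝 1) :=
    tendsto_nhdsWithin_of_tendsto_nhds tendsto_id
  have h := (((((tendsto_FpCoeff (α := α) hp).const_mul (2 * p * (2 * p - 1))).mul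
    (hg.rpow_const (p := 2 * p - 2) (Or.inl one_ne_zero))).sub_const 2).sub
    (((hr.pow 2).const_mul (6 * α ^ 2)).mul (hg.rpow_const (p := -4) (Or.inl one_ne_zero)))).neg
  rw [one_rpow, one_rpow, one_pow,
    show -(2 * p * (2 * p - 1) * ((1 - α ^ 2) / p) * 1 - 2 - 6 * α ^ 2 * 1 * 1) =
      2 * ((2 - 2 * p) + (2 + 2 * p) * α ^ 2) by field_simp; ring] at h
  exact h

theorem tendsto_pi_div_sqrt_neg_Fp'' (hp : p < 0) (hα : α ^ 2 ≤ 1) {g : ℝ → ℝ}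
    (hg : Tendsto g (𝓝[≠] 1) (𝓝 1)) :
    Tendsto (fun r => π / √(-Fp'' p α r (g r) / 2)) (𝓝[≠] 1)
      (𝓝 (π / √((2 - 2 * p) + (2 + 2 * p) * α ^ 2))) := by
  have hC : 0 < (2 - 2 * p) + (2 + 2 * p) * α ^ 2 := by nlinarith
  have h := ((tendsto_neg_Fp'' (α := α) hp.ne hg).div_const 2).sqrt
  rw [mul_div_cancel_left₀ _ two_ne_zero] at h
  exact tendsto_const_nhds.div h (sqrt_pos.2 hC).ne'

end Fp

theorem stmt_10 (p α : ℝ) (hp : p ≤ -1) (hα₀ : 0 < α) (hα₁ : α < 1) :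
    Tendsto (fun r : ℝ => Theta p α r) (nhdsWithin 1 (Set.Ioi 1))
      (nhds (π / Real.sqrt ((2 - 2 * p) + (2 + 2 * p) * α ^ 2))) := by
  have hp₀ : p < 0 := by linarith
  have hα : α ^ 2 ≤ 1 := by nlinarith
  have hlo := tendsto_pi_div_sqrt_neg_Fp'' hp₀ hα (g := fun _ => 1) tendsto_const_nhds
  have hhi := tendsto_pi_div_sqrt_neg_Fp'' hp₀ hα (g := id)
    (tendsto_nhdsWithin_of_tendsto_nhds tendsto_id)
  refine tendsto_of_tendsto_of_tendsto_of_le_of_le' (hlo.mono_left (nhdsGT_le_nhdsNE 1))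
    (hhi.mono_left (nhdsGT_le_nhdsNE 1)) ?_ ?_
  · filter_upwards [self_mem_nhdsWithin] with r hr using pi_div_sqrt_le_Theta hp₀ hα hr
  · filter_upwards [self_mem_nhdsWithin] with r hr using Theta_le_pi_div_sqrt hp₀ hα hr
end

section
/- Let p < -1. Then Θ_p{α, r} < π/2 for all α, r with 0 < α < 1 < r. -/
/-
`F_p` is affine in the weight `(1 - s^{2p}) / (1 - r^{2p})` with coefficient
`(r² - 1)(1 - α²) > 0`, and by strict convexity of `x ↦ x^k` (`k > 1`) this weight strictly
increases as `p` decreases. Hence `F_p > F_{-1}` on `(1, r)` for `p < -1`, so `Θ_p < Θ_{-1}`.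
Finally `F_{-1}(s) = (s² - 1)(r² - s²)/s²` does not depend on `α`, and
`½ arcsin((2s² - 1 - r²)/(r² - 1))` is an antiderivative of `F_{-1}^{-1/2}`, rising by `π/2`
on `[1, r]`.
-/

open Real Filter

open Set MeasureTheory intervalIntegral

lemma one_sub_div_one_sub_lt_one_sub_rpow_div {k a b : ℝ} (hk : 1 < k) (hb : 0 < b)
    (hba : b < a) (ha : a < 1) : (1 - a) / (1 - b) < (1 - a ^ k) / (1 - b ^ k) := by
  have hsec := (strictConvexOn_rpow hk).secant_strict_mono (a := 1) (mem_Ici.2 zero_le_one)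
    (mem_Ici.2 hb.le) (mem_Ici.2 (hb.trans hba).le) (by linarith) ha.ne hba
  have hbk : b ^ k < 1 := rpow_lt_one hb.le (hba.trans ha) (by linarith)
  rw [one_rpow, ← neg_div_neg_eq (b ^ k - 1), ← neg_div_neg_eq (a ^ k - 1), neg_sub, neg_sub,
    neg_sub, neg_sub, div_lt_div_iff₀ (by linarith) (by linarith)] at hsec
  rw [div_lt_div_iff₀ (by linarith) (by linarith)]
  linarith

lemma intervalIntegral_lt_of_forall_mem_Ioo_lt {f g : ℝ → ℝ} {a b : ℝ} (hab : a < b)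
    (hf : AEStronglyMeasurable f (volume.restrict (Ioc a b)))
    (hg : IntervalIntegrable g volume a b) (hf₀ : ∀ x ∈ Ioo a b, 0 ≤ f x)
    (hfg : ∀ x ∈ Ioo a b, f x < g x) :
    ∫ x in a..b, f x < ∫ x in a..b, g x := by
  have hfi : IntervalIntegrable f volume a b := by
    refine hg.mono_fun' (by rwa [uIoc_of_le hab.le]) ?_
    rw [uIoc_of_le hab.le]
    refine ae_restrict_of_ae_eq_of_ae_restrict Ioo_ae_eq_Ioc ?_
    filter_upwards [ae_restrict_mem measurableSet_Ioo] with x hx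
    rw [norm_of_nonneg (hf₀ x hx)]
    exact (hfg x hx).le
  have := intervalIntegral_pos_of_pos_on (hg.sub hfi) (fun x hx => sub_pos.2 (hfg x hx)) hab
  rw [integral_sub hg hfi] at this
  linarith

lemma Fp_eq {p α r : ℝ} (s : ℝ) (hr : r ^ (2 * p) ≠ 1) :
    Fp p α r s = 1 + α ^ 2 * r ^ 2 - s ^ 2 - α ^ 2 * r ^ 2 * s ^ (-2 : ℝ) +
      (1 - s ^ (2 * p)) / (1 - r ^ (2 * p)) * ((r ^ 2 - 1) * (1 - α ^ 2)) := by
  have : 1 - r ^ (2 * p) ≠ 0 := sub_ne_zero.2 hr.symm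
  rw [Fp]
  field_simp
  ring

/- With `x = s ^ (2q)` and `y = r ^ (2q)` this is the secant inequality above for `k = p / q`. -/
lemma one_sub_rpow_div_one_sub_rpow_lt {p q r s : ℝ} (hpq : p < q) (hq : q < 0) (hs : 1 < s)
    (hsr : s < r) :
    (1 - s ^ (2 * q)) / (1 - r ^ (2 * q)) < (1 - s ^ (2 * p)) / (1 - r ^ (2 * p)) := by
  have hs0 : 0 < s := one_pos.trans hs
  have hr0 : 0 < r := hs0.trans hsr
  have hpow : ∀ x : ℝ, 0 < x → (x ^ (2 * q)) ^ (p / q) = x ^ (2 * p) := fun x hx => by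
    rw [← rpow_mul hx.le, mul_assoc, mul_div_cancel₀ p hq.ne]
  rw [← hpow s hs0, ← hpow r hr0]
  exact one_sub_div_one_sub_lt_one_sub_rpow_div ((one_lt_div_of_neg hq).2 hpq)
    (rpow_pos_of_pos hr0 _) (rpow_lt_rpow_of_neg hs0 hsr (by linarith))
    (rpow_lt_one_of_one_lt_of_neg hs (by linarith))

lemma Fp_lt_Fp_of_lt {p q α r s : ℝ} (hpq : p < q) (hq : q < 0) (hα₀ : 0 < α) (hα₁ : α < 1)
    (hs : 1 < s) (hsr : s < r) : Fp q α r s < Fp p α r s := by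
  have hr : 1 < r := hs.trans hsr
  rw [Fp_eq s (rpow_lt_one_of_one_lt_of_neg hr (by linarith)).ne,
    Fp_eq s (rpow_lt_one_of_one_lt_of_neg hr (by linarith)).ne]
  have hfactor : 0 < (r ^ 2 - 1) * (1 - α ^ 2) := by
    apply mul_pos <;> nlinarith
  have := mul_lt_mul_of_pos_right (one_sub_rpow_div_one_sub_rpow_lt hpq hq hs hsr) hfactor
  linarith

lemma Fp_neg_one {α r s : ℝ} (hr : 1 < r) (hs : 0 < s) :
    Fp (-1) α r s = (s ^ 2 - 1) * (r ^ 2 - s ^ 2) / s ^ 2 := by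
  have hneg : ∀ x : ℝ, 0 < x → x ^ (2 * (-1) : ℝ) = (x ^ 2)⁻¹ := fun x hx => by
    rw [show (2 * (-1) : ℝ) = -(2 : ℕ) by norm_num, rpow_neg hx.le, rpow_natCast]
  have hr2 : r ^ 2 - 1 ≠ 0 := by nlinarith
  rw [Fp, hneg r (one_pos.trans hr), hneg s hs, show (-2 : ℝ) = 2 * (-1) by norm_num,
    hneg s hs]
  field_simp
  ring

lemma Fp_neg_one_pos {α r s : ℝ} (hs : 1 < s) (hsr : s < r) : 0 < Fp (-1) α r s := by
  rw [Fp_neg_one (hs.trans hsr) (one_pos.trans hs)]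
  exact div_pos (mul_pos (by nlinarith) (by nlinarith)) (by positivity)

lemma measurable_Theta_integrand (p α r : ℝ) : Measurable fun s => (√(Fp p α r s))⁻¹ := by
  unfold Fp
  fun_prop

lemma hasDerivAt_arcsin_div_two {α r x : ℝ} (hx : 1 < x) (hxr : x < r) :
    HasDerivAt (fun s => arcsin ((2 * s ^ 2 - (1 + r ^ 2)) / (r ^ 2 - 1)) / 2)
      (√(Fp (-1) α r x))⁻¹ x := by
  have hx0 : 0 < x := one_pos.trans hx
  have hr2 : 0 < r ^ 2 - 1 := by nlinarith
  set u : ℝ → ℝ := fun s => (2 * s ^ 2 - (1 + r ^ 2)) / (r ^ 2 - 1)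
  have hu : HasDerivAt u (2 * (2 * x) / (r ^ 2 - 1)) x := by
    simpa using (((hasDerivAt_pow 2 x).const_mul 2).sub_const (1 + r ^ 2)).div_const (r ^ 2 - 1)
  have hu₁ : u x < 1 := by rw [div_lt_one hr2]; nlinarith
  have hu₀ : -1 < u x := by rw [lt_div_iff₀ hr2]; nlinarith
  have hsqrt :
      √(1 - u x ^ 2) = 2 * x / (r ^ 2 - 1) * √((x ^ 2 - 1) * (r ^ 2 - x ^ 2) / x ^ 2) := by
    rw [← sqrt_sq (by positivity : 0 ≤ 2 * x / (r ^ 2 - 1)), ← sqrt_mul (sq_nonneg _)]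
    congr 1
    simp only [u]
    field_simp
    ring
  refine (((hasDerivAt_arcsin hu₀.ne' hu₁.ne).comp x hu).div_const 2).congr_deriv ?_
  have hF := sqrt_pos.2 (Fp_neg_one_pos (α := α) hx hxr)
  rw [Fp_neg_one (hx.trans hxr) hx0] at hF ⊢
  rw [hsqrt]
  field_simp

lemma continuous_arcsin_div_two (r : ℝ) :
    Continuous fun s => arcsin ((2 * s ^ 2 - (1 + r ^ 2)) / (r ^ 2 - 1)) / 2 := by
  fun_prop

lemma intervalIntegrable_Theta_integrand_neg_one {α r : ℝ} (hr : 1 < r) :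
    IntervalIntegrable (fun s => (√(Fp (-1) α r s))⁻¹) volume 1 r :=
  (intervalIntegrable_iff_integrableOn_Ioc_of_le hr.le).2 <|
    integrableOn_deriv_of_nonneg (continuous_arcsin_div_two r).continuousOn
      (fun _ hx => hasDerivAt_arcsin_div_two hx.1 hx.2) (fun _ _ => by positivity)

lemma Theta_neg_one {α r : ℝ} (hr : 1 < r) : Theta (-1) α r = π / 2 := by
  have hr2 : r ^ 2 - 1 ≠ 0 := by nlinarith
  rw [Theta, integral_eq_sub_of_hasDerivAt_of_le hr.le
    (continuous_arcsin_div_two r).continuousOn (fun _ hx => hasDerivAt_arcsin_div_two hx.1 hx.2)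
    (intervalIntegrable_Theta_integrand_neg_one hr)]
  have h₁ : (2 * r ^ 2 - (1 + r ^ 2)) / (r ^ 2 - 1) = 1 := by field_simp; ring
  have h₀ : (2 * 1 ^ 2 - (1 + r ^ 2)) / (r ^ 2 - 1) = -1 := by field_simp; ring
  simp only [h₁, h₀, arcsin_one, arcsin_neg_one]
  ring

theorem stmt_15 (p : ℝ) (hp : p < -1) (α r : ℝ) (hα₀ : 0 < α) (hα₁ : α < 1) (hr : 1 < r) :
    Theta p α r < π / 2 := by
  rw [← Theta_neg_one (α := α) hr]
  refine intervalIntegral_lt_of_forall_mem_Ioo_lt hr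
    (measurable_Theta_integrand p α r).aestronglyMeasurable
    (intervalIntegrable_Theta_integrand_neg_one hr) (fun _ _ => by positivity) fun s hs => ?_
  have hpos := Fp_neg_one_pos (α := α) hs.1 hs.2
  exact inv_strictAnti₀ (sqrt_pos.2 hpos)
    (sqrt_lt_sqrt hpos.le (Fp_lt_Fp_of_lt hp (by norm_num) hα₀ hα₁ hs.1 hs.2))
end
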